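/- arXiv:2004.11860 — 4 statements merged into one kernel-verified Lean document; each statement's English description precedes it below -/
import Mathlib

section
/- For any pooling scheme and infection vector, the number Z of infection-status assignments consistent with the test outcomes satisfies Z ≥ |V_{1+}| · |V_{0+}|, where V_{1+} is the set of infected individuals each of whose tests contains another infected individual, and V_{0+} is the set of uninfected individuals all of whose tests are positive. Concretely: for each pair (x, y) with x ∈ V_{1+} and y ∈ V_{0+}, swapping the statuses of x and y yields a distinct assignment producing the same test outcomes. -/
/-!
Composing `σ` with the transposition of an infected `x` and an uninfected `y` keeps the number
of infected individuals. It keeps every test outcome as well: a test containing `x` stays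
positive because it holds another infected individual, and a test containing `y` was positive
already. Distinct pairs give distinct assignments, since `y` is the only individual that turns
infected and `x` the only one that turns healthy.
-/

open Finset
open scoped Classical

section SwapStatuses

variable {V β : Type*} [DecidableEq V] {σ : V → β} {x y : V}

theorem comp_swap_eq_and_eq_iff (hxy : σ x ≠ σ y) (v : V) :
    σ (Equiv.swap x y v) = σ x ∧ σ v = σ y ↔ v = y := by
  rcases eq_or_ne v x with rfl | hvx
  · simp only [Equiv.swap_apply_left, hxy.symm, false_and, false_iff]
    exact fun h => hxy (congrArg σ h)
  rcases eq_or_ne v y with rfl | hvy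
  · simp
  simp only [Equiv.swap_apply_of_ne_of_ne hvx hvy, hvy, iff_false, not_and]
  exact fun hx hy => hxy (hx.symm.trans hy)

theorem eq_and_eq_of_comp_swap_eq {x' y' : V} (hxy : σ x ≠ σ y) (hx : σ x' = σ x)
    (hy : σ y' = σ y) (h : σ ∘ Equiv.swap x y = σ ∘ Equiv.swap x' y') : x = x' ∧ y = y' := by
  refine ⟨?_, ?_⟩
  · refine ((comp_swap_eq_and_eq_iff hxy.symm x').mp ⟨?_, hx⟩).symm
    rw [Equiv.swap_comm, ← Function.comp_apply (f := σ), h]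
    simp [hy]
  · refine ((comp_swap_eq_and_eq_iff hxy y').mp ⟨?_, hy⟩).symm
    rw [← Function.comp_apply (f := σ), h]
    simp [hx]

end SwapStatuses

theorem card_filter_comp_equiv {V W : Type*} [Fintype V] [Fintype W] (e : V ≃ W)
    (p : W → Prop) [DecidablePred p] : #(univ.filter fun v => p (e v)) = #(univ.filter p) :=
  card_equiv e (by simp)

theorem exists_mem_comp_swap_iff {V : Type*} [DecidableEq V] {σ : V → Bool} {x y : V}
    {s : Finset V} (hx : σ x = true) (hy : σ y = false)
    (hxs : x ∈ s → ∃ w ∈ s, w ≠ x ∧ σ w = true) (hys : y ∈ s → ∃ w ∈ s, σ w = true) :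
    (∃ z ∈ s, σ (Equiv.swap x y z) = true) ↔ ∃ z ∈ s, σ z = true := by
  have swap_fixes {z : V} (hzx : z ≠ x) (hz : σ z = true) : σ (Equiv.swap x y z) = true := by
    rwa [Equiv.swap_apply_of_ne_of_ne hzx (by rintro rfl; simp_all)]
  constructor
  · rintro ⟨z, hzs, hz⟩
    rcases eq_or_ne z x with rfl | hzx
    · simp_all
    rcases eq_or_ne z y with rfl | hzy
    · exact hys hzs
    exact ⟨z, hzs, by rwa [Equiv.swap_apply_of_ne_of_ne hzx hzy] at hz⟩
  · rintro ⟨z, hzs, hz⟩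
    rcases eq_or_ne z x with rfl | hzx
    · obtain ⟨w, hws, hwz, hw⟩ := hxs hzs
      exact ⟨w, hws, swap_fixes hwz hw⟩
    · exact ⟨z, hzs, swap_fixes hzx hz⟩

/-- The number of infection-status assignments consistent with the test outcomes is at
least `|V₁₊| · |V₀₊|`: swapping a totally disguised infected individual with a disguised
uninfected one yields a distinct assignment with the same outcomes. -/
theorem stmt_3 {V F : Type*} [Fintype V] [DecidableEq V] [Fintype F]
    (tests : F → Finset V) (σ : V → Bool) :
    let outcome : (V → Bool) → F → Prop := fun τ a => ∃ x ∈ tests a, τ x = true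
    let k : ℕ := (Finset.univ.filter fun x => σ x = true).card
    let V1p : Finset V := Finset.univ.filter fun x =>
      σ x = true ∧ ∀ a, x ∈ tests a → ∃ y ∈ tests a, y ≠ x ∧ σ y = true
    let V0p : Finset V := Finset.univ.filter fun x =>
      σ x = false ∧ ∀ a, x ∈ tests a → ∃ y ∈ tests a, σ y = true
    let Z : ℕ := (Finset.univ.filter fun τ : V → Bool =>
      (Finset.univ.filter fun x => τ x = true).card = k ∧
        ∀ a, outcome τ a ↔ outcome σ a).card
    V1p.card * V0p.card ≤ Z := by
  intro outcome k V1p V0p Z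
  rw [← card_product]
  refine card_le_card_of_injOn (fun p => σ ∘ Equiv.swap p.1 p.2) ?_ ?_
  · rintro ⟨x, y⟩ hp
    simp only [V1p, V0p, coe_product, Set.mem_prod, coe_filter, mem_univ, true_and,
      Set.mem_ofPred_eq] at hp
    obtain ⟨⟨hx, hxs⟩, hy, hys⟩ := hp
    simp only [coe_filter, mem_univ, true_and, Set.mem_ofPred_eq, Function.comp_apply]
    exact ⟨card_filter_comp_equiv (Equiv.swap x y) (σ · = true),
      fun a => exists_mem_comp_swap_iff hx hy (hxs a) (hys a)⟩
  · rintro ⟨x, y⟩ hp ⟨x', y'⟩ hp' h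
    simp only [V1p, V0p, coe_product, Set.mem_prod, coe_filter, mem_univ, true_and,
      Set.mem_ofPred_eq] at hp hp'
    obtain ⟨⟨hx, -⟩, hy, -⟩ := hp
    obtain ⟨⟨hx', -⟩, hy', -⟩ := hp'
    obtain ⟨rfl, rfl⟩ := eq_and_eq_of_comp_swap_eq (by simp [hx, hy]) (hx'.trans hx.symm)
      (hy'.trans hy.symm) h
    rfl
end

section
/- The DD algorithm, which (1) declares every individual appearing in a negative test as uninfected, (2) declares every individual that is the sole remaining individual in a positive test as infected, and (3) declares all remaining individuals uninfected, recovers the true infection vector σ exactly if and only if every infected individual belongs to V_{1--}, i.e., appears in at least one test all of whose other members appear in some negative test. -/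
open Finset

/-- The DD algorithm recovers the true infection vector exactly if and only if every
infected individual belongs to `V₁₋₋`, i.e. appears in a test all of whose other members
appear in some negative test. -/
theorem stmt_4 {V F : Type*} (tests : F → Finset V) (σ : V → Bool) :
    -- a test is negative iff all its members are uninfected
    let negative : F → Prop := fun a => ∀ x ∈ tests a, σ x = false
    -- easy uninfected individuals: uninfected and appearing in some negative test
    let V0m : V → Prop := fun x => σ x = false ∧ ∃ a, x ∈ tests a ∧ negative a
    -- V₁₋₋: infected, in some test whose other members are all easy uninfected
    let V1mm : V → Prop := fun x => σ x = true ∧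
      ∃ a, x ∈ tests a ∧ ∀ y ∈ tests a, y ≠ x → V0m y
    -- DD declares `x` infected iff `x` appears in no negative test and, after removing
    -- the easy uninfected individuals, `x` is the sole remaining member of some test
    let ddInfected : V → Prop := fun x =>
      (∀ a, x ∈ tests a → ¬ negative a) ∧
      ∃ a, x ∈ tests a ∧ ∀ y ∈ tests a, y ≠ x → V0m y
    -- DD recovers σ exactly iff every infected individual is in V₁₋₋
    ((∀ x, ddInfected x ↔ σ x = true) ↔ (∀ x, σ x = true → V1mm x)) := by
  intro negative V0m V1mm ddInfected
  constructor
  · intro h x hx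
    exact ⟨hx, ((h x).mpr hx).2⟩
  · intro h x
    constructor
    · rintro ⟨hneg, a, hxa, hoth⟩
      by_contra hσ
      have hσf : σ x = false := by simpa using hσ
      exact hneg a hxa (fun y hy => by
        by_cases hyx : y = x
        · exact hyx ▸ hσf
        · exact (hoth y hy hyx).1)
    · intro hx
      obtain ⟨_, a, hxa, hoth⟩ := h x hx
      refine ⟨fun b hxb hb => ?_, a, hxa, hoth⟩
      have := hb x hxb
      simp [hx] at this
end

section
/- Under any (possibly adaptive) group testing strategy in which each of n individuals participates in at most Δ tests, the total number of positive test outcomes is at most Δ·k, where k is the number of infected individuals. Consequently, the number of possible outcome vectors is at most Σ_{i=0}^{Δk} C(m, i), and the success probability of any inference algorithm for a uniformly random k-subset of infected individuals is at most (Σ_{i=0}^{Δk} C(m, i)) / C(n, k). -/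
/-!
Every positive test contains an infected individual, so the positive tests are covered by the
at most `Δ` tests of each of the `k` infected individuals: there are at most `Δk` of them.
An inference algorithm `A` succeeds on `S` only if `S = A (outcome S)`, so on successful sets
`S ↦ {positive tests}` is injective, with values among the subsets of `[m]` of size `≤ Δk`.
-/

open Finset
open scoped Classical

variable {ι α β : Type*}

theorem card_filter_inter_nonempty_le [Fintype ι] [DecidableEq α] (tests : ι → Finset α)
    (S : Finset α) {Δ : ℕ}
    (hΔ : ∀ x ∈ S, #{j | x ∈ tests j} ≤ Δ) :
    #{j | (S ∩ tests j).Nonempty} ≤ Δ * #S := by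
  have hsub : ({j | (S ∩ tests j).Nonempty} : Finset ι) ⊆
      S.biUnion fun x => {j | x ∈ tests j} := by
    intro j hj
    obtain ⟨x, hx⟩ := (mem_filter.1 hj).2
    rw [mem_inter] at hx
    exact mem_biUnion.2 ⟨x, hx.1, mem_filter.2 ⟨mem_univ j, hx.2⟩⟩
  calc #{j | (S ∩ tests j).Nonempty}
      ≤ #(S.biUnion fun x => {j | x ∈ tests j}) := card_le_card hsub
    _ ≤ ∑ x ∈ S, #{j | x ∈ tests j} := card_biUnion_le
    _ ≤ ∑ _x ∈ S, Δ := sum_le_sum hΔ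
    _ = Δ * #S := by rw [sum_const, smul_eq_mul, mul_comm]

theorem card_filter_card_le_eq_sum_choose [Fintype ι] (r : ℕ) :
    #{T : Finset ι | #T ≤ r} = ∑ i ∈ range (r + 1), (Fintype.card ι).choose i := by
  rw [card_eq_sum_card_fiberwise (f := card) (t := range (r + 1))
    fun T hT => mem_range_succ_iff.2 (mem_filter.1 hT).2]
  refine sum_congr rfl fun i hi => ?_
  rw [filter_filter, ← card_univ, ← card_powersetCard, powersetCard_eq_filter, powerset_univ]
  congr 1
  exact filter_congr fun T _ => ⟨fun h => h.2, fun h => ⟨h ▸ mem_range_succ_iff.1 hi, h⟩⟩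

theorem card_filter_apply_eq_self_le {f : α → β} {g : β → α} {s : Finset α} {t : Finset β}
    (hf : ∀ a ∈ s, f a ∈ t) : #{a ∈ s | g (f a) = a} ≤ #t := by
  refine card_le_card_of_injOn f (fun a ha => hf a (mem_filter.1 ha).1) fun a ha b hb hab => ?_
  rw [← (mem_filter.1 ha).2, ← (mem_filter.1 hb).2]
  exact congrArg g hab

/-- Counting converse: if each individual is in at most `Δ` tests, then any infected set
of size `k` yields at most `Δk` positive tests, so at most `∑_{i≤Δk} C(m,i)` outcome
vectors are possible, and the success probability of any inference algorithm over a
uniformly random `k`-subset of infected individuals is at most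
`(∑_{i≤Δk} C(m,i)) / C(n,k)`. -/
theorem stmt_6 (n m k Δ : ℕ)
    (tests : Fin m → Finset (Fin n))
    (hΔ : ∀ x : Fin n, (Finset.univ.filter fun j => x ∈ tests j).card ≤ Δ)
    (outcome : Finset (Fin n) → Fin m → Prop)
    (houtcome : ∀ S j, outcome S j ↔ (S ∩ tests j).Nonempty)
    (A : (Fin m → Bool) → Finset (Fin n)) :
    (∀ S : Finset (Fin n), S.card = k →
        (Finset.univ.filter fun j => outcome S j).card ≤ Δ * k) ∧
    ((Finset.univ.filter fun S : Finset (Fin n) =>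
        S.card = k ∧ A (fun j => decide (outcome S j)) = S).card
      ≤ ∑ i ∈ Finset.range (Δ * k + 1), m.choose i) ∧
    (((Finset.univ.filter fun S : Finset (Fin n) =>
        S.card = k ∧ A (fun j => decide (outcome S j)) = S).card : ℝ) / (n.choose k)
      ≤ (∑ i ∈ Finset.range (Δ * k + 1), (m.choose i : ℝ)) / (n.choose k)) := by
  have hpositive : ∀ S : Finset (Fin n), #S = k → #{j | outcome S j} ≤ Δ * k := by
    intro S hS
    rw [filter_congr fun j _ => houtcome S j, ← hS]
    exact card_filter_inter_nonempty_le tests S fun x _ => hΔ x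
  have hsuccess : #{S : Finset (Fin n) | #S = k ∧ A (fun j => decide (outcome S j)) = S}
      ≤ ∑ i ∈ range (Δ * k + 1), m.choose i := by
    have hcount := card_filter_card_le_eq_sum_choose (ι := Fin m) (Δ * k)
    rw [Fintype.card_fin] at hcount
    rw [← hcount, ← filter_filter]
    simpa only [mem_filter, mem_univ, true_and] using
      card_filter_apply_eq_self_le (f := fun S => ({j | outcome S j} : Finset (Fin m)))
        (g := fun T => A fun j => decide (j ∈ T)) (s := {S : Finset (Fin n) | #S = k})
        (t := {T : Finset (Fin m) | #T ≤ Δ * k}) fun S hS =>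
          mem_filter.2 ⟨mem_univ _, hpositive S (mem_filter.1 hS).2⟩
  refine ⟨hpositive, hsuccess, div_le_div_of_nonneg_right ?_ (Nat.cast_nonneg _)⟩
  exact_mod_cast hsuccess
end

section
/- Let B ⊆ V be a set of individuals in a bounded-degree pooling graph such that each x ∈ B has degree at most d and any two distinct members of B are at graph distance at least 6. If each individual is infected independently with probability p, then the events {x is totally disguised and infected} for x ∈ B are mutually independent, each occurring with probability at least p·Π_{a ∈ ∂x}(1 - (1-p)^{deg(a)-1}) by the FKG inequality, and hence the number of totally disguised infected individuals in B stochastically dominates a binomial random variable Bin(|B|, p·C·p^d) for a suitable constant C > 0 depending only on the maximum test size. -/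
open Finset
open scoped Classical

/-- Probability of an event under the i.i.d. Bernoulli(p) infection model. -/
noncomputable def prB {V : Type} [Fintype V] [DecidableEq V]
    (p : ℝ) (E : (V → Bool) → Prop) : ℝ :=
  ∑ σ : V → Bool, if E σ then
    p ^ (Finset.univ.filter fun x => σ x = true).card *
      (1 - p) ^ (Fintype.card V - (Finset.univ.filter fun x => σ x = true).card)
  else 0

/-- The bipartite pooling graph on individuals and tests. -/
def poolGraph {V F : Type} (tests : F → Finset V) : SimpleGraph (V ⊕ F) :=
  SimpleGraph.fromRel (fun u w => ∃ x a, u = Sum.inl x ∧ w = Sum.inr a ∧ x ∈ tests a)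

/-- `x` is infected and totally disguised: every test containing `x` contains another
infected individual. -/
def disguisedInf {V F : Type} (tests : F → Finset V) (x : V) (σ : V → Bool) : Prop :=
  σ x = true ∧ ∀ a, x ∈ tests a → ∃ y ∈ tests a, y ≠ x ∧ σ y = true

/-!
Under the product Bernoulli(`p`) measure on `V → Bool`, whether `x` is a disguised infected
individual only depends on the infection states in its second neighbourhood. Two individuals at
distance at least 6 have disjoint second neighbourhoods, and events determined by disjoint sets of
coordinates are independent; this gives the product formula and, peeling off one individual at a
time, the domination of the binomial tail. The lower bound for a single individual is Harris'
inequality applied to the increasing events "`x` is infected" and "test `a` has an infected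
member other than `x`", each of which has an explicit probability. Harris' inequality itself is
Mathlib's FKG inequality, since the product weight is log-modular on the lattice `V → Bool`.
-/

section Bernoulli

variable {V : Type} [Fintype V]

noncomputable def bernWeight (p : ℝ) (σ : V → Bool) : ℝ :=
  ∏ x, if σ x then p else 1 - p

lemma bernWeight_nonneg {p : ℝ} (hp0 : 0 ≤ p) (hp1 : p ≤ 1) (σ : V → Bool) :
    0 ≤ bernWeight p σ :=
  Finset.prod_nonneg fun x _ => by split <;> linarith

lemma sum_bernWeight_mul_prod [DecidableEq V] (p : ℝ) (g : V → Bool → ℝ) :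
    ∑ σ : V → Bool, bernWeight p σ * ∏ x, g x (σ x) =
      ∏ x, ((1 - p) * g x false + p * g x true) := by
  simp only [bernWeight, ← Finset.prod_mul_distrib]
  rw [← Fintype.prod_sum (fun x b => (if b then p else 1 - p) * g x b)]
  simp only [Fintype.sum_bool, if_true, Bool.false_eq_true, if_false, add_comm]

lemma sum_bernWeight [DecidableEq V] (p : ℝ) : ∑ σ : V → Bool, bernWeight p σ = 1 := by
  simpa using sum_bernWeight_mul_prod p (fun _ _ => 1)

variable [DecidableEq V]

lemma prB_eq_sum_bernWeight (p : ℝ) (E : (V → Bool) → Prop) :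
    prB p E = ∑ σ, if E σ then bernWeight p σ else 0 := by
  refine Finset.sum_congr rfl fun σ _ => ?_
  congr 1
  rw [bernWeight, Finset.prod_ite, Finset.prod_const, Finset.prod_const,
    Finset.filter_not, Finset.card_sdiff_of_subset (Finset.filter_subset _ _), Finset.card_univ]

lemma prB_congr (p : ℝ) {E G : (V → Bool) → Prop} (h : ∀ σ, E σ ↔ G σ) :
    prB p E = prB p G := by
  rw [show E = G from funext fun σ => propext (h σ)]

lemma prB_of_forall (p : ℝ) {E : (V → Bool) → Prop} (h : ∀ σ, E σ) : prB p E = 1 := by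
  simp [prB_eq_sum_bernWeight, h, sum_bernWeight]

lemma prB_nonneg {p : ℝ} (hp0 : 0 ≤ p) (hp1 : p ≤ 1) (E : (V → Bool) → Prop) :
    0 ≤ prB p E := by
  rw [prB_eq_sum_bernWeight]
  exact Finset.sum_nonneg fun σ _ => by split <;> simp [bernWeight_nonneg hp0 hp1]

lemma prB_mono {p : ℝ} (hp0 : 0 ≤ p) (hp1 : p ≤ 1) {E G : (V → Bool) → Prop}
    (h : ∀ σ, E σ → G σ) : prB p E ≤ prB p G := by
  simp only [prB_eq_sum_bernWeight]
  refine Finset.sum_le_sum fun σ _ => ?_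
  by_cases hE : E σ
  · simp [hE, h σ hE]
  · by_cases hG : G σ <;> simp [hE, hG, bernWeight_nonneg hp0 hp1]

lemma prB_add_prB_not (p : ℝ) (E : (V → Bool) → Prop) :
    prB p E + prB p (fun σ => ¬ E σ) = 1 := by
  simp only [prB_eq_sum_bernWeight, ← Finset.sum_add_distrib, ← sum_bernWeight (V := V) p]
  exact Finset.sum_congr rfl fun σ _ => by by_cases h : E σ <;> simp [h]

lemma prB_le_one {p : ℝ} (hp0 : 0 ≤ p) (hp1 : p ≤ 1) (E : (V → Bool) → Prop) :
    prB p E ≤ 1 := by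
  linarith [prB_add_prB_not p E, prB_nonneg hp0 hp1 fun σ => ¬ E σ]

lemma prB_or_of_disjoint (p : ℝ) {E G : (V → Bool) → Prop} (h : ∀ σ, E σ → ¬ G σ) :
    prB p (fun σ => E σ ∨ G σ) = prB p E + prB p G := by
  simp only [prB_eq_sum_bernWeight, ← Finset.sum_add_distrib]
  refine Finset.sum_congr rfl fun σ _ => ?_
  by_cases hE : E σ
  · simp [hE, h σ hE]
  · by_cases hG : G σ <;> simp [hE, hG]

lemma prB_forall_mem_eq (p : ℝ) (s : Finset V) (c : V → Bool) :
    prB p (fun σ => ∀ y ∈ s, σ y = c y) = ∏ y ∈ s, if c y then p else 1 - p := by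
  rw [prB_eq_sum_bernWeight]
  trans ∑ σ, bernWeight p σ * ∏ y, if y ∈ s then (if σ y = c y then 1 else 0) else 1
  · refine Finset.sum_congr rfl fun σ _ => ?_
    rw [Fintype.prod_ite_mem, Finset.prod_boole]
    split_ifs <;> simp
  rw [sum_bernWeight_mul_prod p fun y b => if y ∈ s then (if b = c y then 1 else 0) else 1,
    ← Fintype.prod_ite_mem s]
  refine Finset.prod_congr rfl fun y _ => ?_
  by_cases hy : y ∈ s <;> cases c y <;> simp [hy]

lemma prB_coord_eq_true (p : ℝ) (x : V) : prB p (fun σ => σ x = true) = p := by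
  simpa using prB_forall_mem_eq p {x} fun _ => true

lemma prB_exists_mem_eq_true (p : ℝ) (s : Finset V) :
    prB p (fun σ => ∃ y ∈ s, σ y = true) = 1 - (1 - p) ^ s.card := by
  have hnone : prB p (fun σ => ¬ ∃ y ∈ s, σ y = true) = (1 - p) ^ s.card := by
    simpa using prB_forall_mem_eq p s fun _ => false
  linarith [prB_add_prB_not p fun σ => ∃ y ∈ s, σ y = true]

end Bernoulli

section Harris

lemma monotone_indicator {α : Type*} [Preorder α] {E : α → Prop} (hE : Monotone E) :
    Monotone fun a => if E a then (1 : ℝ) else 0 := by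
  intro a b h
  by_cases ha : E a
  · simp [ha, hE h ha]
  · dsimp only
    split_ifs <;> norm_num

variable {V : Type} [Fintype V]

lemma bernWeight_mul_eq_inf_mul_sup (p : ℝ) (σ τ : V → Bool) :
    bernWeight p σ * bernWeight p τ = bernWeight p (σ ⊓ τ) * bernWeight p (σ ⊔ τ) := by
  simp only [bernWeight, ← Finset.prod_mul_distrib]
  refine Finset.prod_congr rfl fun x _ => ?_
  rw [Pi.inf_apply, Pi.sup_apply]
  cases σ x <;> cases τ x <;> simp [mul_comm]

variable [DecidableEq V]

lemma prB_eq_sum_bernWeight_mul (p : ℝ) (E : (V → Bool) → Prop) :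
    prB p E = ∑ σ, bernWeight p σ * if E σ then 1 else 0 := by
  simp only [prB_eq_sum_bernWeight, mul_ite, mul_one, mul_zero]

lemma prB_mul_prB_le_prB_and {p : ℝ} (hp0 : 0 ≤ p) (hp1 : p ≤ 1) {E G : (V → Bool) → Prop}
    (hE : Monotone E) (hG : Monotone G) :
    prB p E * prB p G ≤ prB p fun σ => E σ ∧ G σ := by
  have hfkg := fkg _ _ (bernWeight p) (bernWeight_nonneg hp0 hp1)
    (fun σ => by dsimp only; positivity) (fun σ => by dsimp only; positivity)
    (monotone_indicator hE) (monotone_indicator hG)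
    fun σ τ => (bernWeight_mul_eq_inf_mul_sup p σ τ).le
  simp only [sum_bernWeight, one_mul] at hfkg
  simp only [prB_eq_sum_bernWeight_mul]
  refine hfkg.trans_eq (Finset.sum_congr rfl fun σ _ => ?_)
  by_cases h1 : E σ <;> by_cases h2 : G σ <;> simp [h1, h2]

lemma prod_prB_le_prB_forall {p : ℝ} (hp0 : 0 ≤ p) (hp1 : p ≤ 1) {ι : Type*} (s : Finset ι)
    {E : ι → (V → Bool) → Prop} (hE : ∀ i ∈ s, Monotone (E i)) :
    ∏ i ∈ s, prB p (E i) ≤ prB p fun σ => ∀ i ∈ s, E i σ := by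
  classical
  induction s using Finset.induction_on with
  | empty => simp [prB_of_forall]
  | insert i s hi ih =>
    rw [Finset.prod_insert hi, prB_congr p fun σ => Finset.forall_mem_insert i s (E · σ)]
    have hEs : ∀ j ∈ s, Monotone (E j) := fun j hj => hE j (Finset.mem_insert_of_mem hj)
    calc prB p (E i) * ∏ j ∈ s, prB p (E j)
        ≤ prB p (E i) * prB p (fun σ => ∀ j ∈ s, E j σ) :=
          mul_le_mul_of_nonneg_left (ih hEs) (prB_nonneg hp0 hp1 _)
      _ ≤ _ := prB_mul_prB_le_prB_and hp0 hp1 (hE i (Finset.mem_insert_self i s))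
          fun σ τ h hσ j hj => hEs j hj h (hσ j hj)

end Harris

section Independence

variable {V : Type} [Fintype V] [DecidableEq V]

lemma bernWeight_piecewise_mul (p : ℝ) (T : Finset V) (σ τ : V → Bool) :
    bernWeight p (T.piecewise σ τ) * bernWeight p (T.piecewise τ σ) =
      bernWeight p σ * bernWeight p τ := by
  simp only [bernWeight, ← Finset.prod_mul_distrib]
  refine Finset.prod_congr rfl fun x _ => ?_
  by_cases hx : x ∈ T <;> simp [hx, mul_comm]

lemma prB_and_of_dependsOn (p : ℝ) (T : Finset V) {E G : (V → Bool) → Prop}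
    (hE : DependsOn E T) (hG : DependsOn G (↑T)ᶜ) :
    prB p (fun σ => E σ ∧ G σ) = prB p E * prB p G := by
  -- swapping the `T`-coordinates of a pair of configurations preserves the joint weight
  let swap : (V → Bool) × (V → Bool) → (V → Bool) × (V → Bool) :=
    fun st => (T.piecewise st.1 st.2, T.piecewise st.2 st.1)
  have hswap : Function.Involutive swap := fun st => by
    ext x <;> by_cases hx : x ∈ T <;> simp [swap, hx]
  have hE' : ∀ σ τ, E (T.piecewise σ τ) = E σ := fun σ τ =>
    hE fun x hx => Finset.piecewise_eq_of_mem _ _ _ hx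
  have hG' : ∀ σ τ, G (T.piecewise τ σ) = G σ := fun σ τ =>
    hG fun x hx => Finset.piecewise_eq_of_notMem _ _ _ hx
  simp only [prB_eq_sum_bernWeight_mul, Finset.sum_mul_sum, ← Fintype.sum_prod_type']
  rw [← Equiv.sum_comp (hswap.toPerm _)]
  simp only [Function.Involutive.coe_toPerm, swap, hE', hG']
  rw [Fintype.sum_prod_type]
  refine Finset.sum_congr rfl fun σ _ => ?_
  trans bernWeight p σ * ((if E σ then 1 else 0) * if G σ then 1 else 0) * 1
  · rw [mul_one]
    congr 1
    split_ifs <;> simp_all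
  rw [← sum_bernWeight (V := V) p, Finset.mul_sum]
  refine Finset.sum_congr rfl fun τ _ => ?_
  rw [← mul_mul_mul_comm, bernWeight_piecewise_mul]
  ring

end Independence

section Binomial

noncomputable def binomialTail (n : ℕ) (q : ℝ) (j : ℕ) : ℝ :=
  ∑ i ∈ Finset.Icc j n, (n.choose i : ℝ) * q ^ i * (1 - q) ^ (n - i)

lemma binomialTail_zero_right (n : ℕ) (q : ℝ) : binomialTail n q 0 = 1 := by
  have := (add_pow q (1 - q) n).symm
  rw [add_sub_cancel, one_pow] at this
  rw [binomialTail, ← Nat.range_succ_eq_Icc_zero]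
  exact (Finset.sum_congr rfl fun i _ => by ring).trans this

lemma binomialTail_zero_succ (q : ℝ) (j : ℕ) : binomialTail 0 q (j + 1) = 0 := by
  simp [binomialTail]

lemma choose_succ_mul_pow (n i : ℕ) (q : ℝ) :
    ((n + 1).choose (i + 1) : ℝ) * q ^ (i + 1) * (1 - q) ^ (n - i) =
      q * ((n.choose i : ℝ) * q ^ i * (1 - q) ^ (n - i)) +
        (1 - q) * ((n.choose (i + 1) : ℝ) * q ^ (i + 1) * (1 - q) ^ (n - (i + 1))) := by
  rcases lt_or_ge i n with hi | hi
  · rw [show n - i = n - (i + 1) + 1 by omega, Nat.choose_succ_succ', Nat.cast_add]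
    ring
  · rw [Nat.choose_eq_zero_of_lt (show n < i + 1 by omega), Nat.choose_succ_succ',
      Nat.choose_eq_zero_of_lt (show n < i + 1 by omega)]
    push_cast
    ring

lemma binomialTail_succ_succ (n : ℕ) (q : ℝ) (j : ℕ) :
    binomialTail (n + 1) q (j + 1) =
      q * binomialTail n q j + (1 - q) * binomialTail n q (j + 1) := by
  have hshift : ∀ f : ℕ → ℝ,
      ∑ i ∈ Finset.Icc (j + 1) (n + 1), f i = ∑ i ∈ Finset.Icc j n, f (i + 1) := fun f => by
    rw [← Finset.map_add_right_Icc, Finset.sum_map]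
    rfl
  have htop : ∑ i ∈ Finset.Icc (j + 1) (n + 1), (n.choose i : ℝ) * q ^ i * (1 - q) ^ (n - i) =
      binomialTail n q (j + 1) := by
    refine (Finset.sum_subset (Finset.Icc_subset_Icc_right n.le_succ) fun i hi hin => ?_).symm
    simp only [Finset.mem_Icc, not_and, not_le] at hi hin
    rw [Nat.choose_eq_zero_of_lt (hin hi.1), Nat.cast_zero, zero_mul, zero_mul]
  rw [binomialTail, hshift, ← htop, hshift]
  simp only [Nat.add_sub_add_right, choose_succ_mul_pow, Finset.sum_add_distrib, Finset.mul_sum]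
  rw [binomialTail, Finset.mul_sum]

end Binomial

section Domination

variable {V ι : Type}

lemma dependsOn_filter {A : ι → (V → Bool) → Prop} {B : Finset ι} {U : Set V}
    (hA : ∀ y ∈ B, DependsOn (A y) U) : DependsOn (fun σ => B.filter (A · σ)) U :=
  fun _ _ h => Finset.filter_congr fun y hy => iff_of_eq (hA y hy h)

variable [DecidableEq ι]

lemma dependsOn_compl_of_pairwiseDisjoint {A : ι → (V → Bool) → Prop} {S : ι → Finset V}
    {x : ι} {B : Finset ι} (hx : x ∉ B) (hA : ∀ y ∈ insert x B, DependsOn (A y) (S y))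
    (hS : (↑(insert x B) : Set ι).PairwiseDisjoint S) :
    DependsOn (fun σ => B.filter (A · σ)) (↑(S x))ᶜ :=
  dependsOn_filter fun y hy => (hA y (Finset.mem_insert_of_mem hy)).mono <|
    Set.subset_compl_iff_disjoint_left.mpr <| Finset.disjoint_coe.mpr <|
      hS (Finset.mem_insert_self x B) (Finset.mem_insert_of_mem hy) fun h => hx (h ▸ hy)

variable [Fintype V] [DecidableEq V]

lemma prB_forall_eq_prod (p : ℝ) (A : ι → (V → Bool) → Prop) (S : ι → Finset V)
    (B : Finset ι) (hA : ∀ x ∈ B, DependsOn (A x) (S x))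
    (hS : (B : Set ι).PairwiseDisjoint S) :
    prB p (fun σ => ∀ x ∈ B, A x σ) = ∏ x ∈ B, prB p (A x) := by
  induction B using Finset.induction_on with
  | empty => simp [prB_of_forall]
  | insert x B hx ih =>
    have hrest : DependsOn (fun σ => ∀ y ∈ B, A y σ) (↑(S x))ᶜ := fun σ τ h => by
      simp only [← Finset.filter_eq_self (s := B), dependsOn_compl_of_pairwiseDisjoint hx hA hS h]
    rw [prB_congr p fun σ => Finset.forall_mem_insert x B (A · σ),
      prB_and_of_dependsOn p _ (hA x (Finset.mem_insert_self x B)) hrest, Finset.prod_insert hx,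
      ih (fun y hy => hA y (Finset.mem_insert_of_mem hy)) (hS.subset (by simp))]

lemma prB_succ_le_card_filter_insert (p : ℝ) {A : ι → (V → Bool) → Prop}
    {S : ι → Finset V} {x : ι} {B : Finset ι} (hx : x ∉ B)
    (hA : ∀ y ∈ insert x B, DependsOn (A y) (S y))
    (hS : (↑(insert x B) : Set ι).PairwiseDisjoint S) (j : ℕ) :
    prB p (fun σ => j + 1 ≤ ((insert x B).filter (A · σ)).card) =
      prB p (A x) * prB p (fun σ => j ≤ (B.filter (A · σ)).card) +
        (1 - prB p (A x)) * prB p (fun σ => j + 1 ≤ (B.filter (A · σ)).card) := by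
  have hAx := hA x (Finset.mem_insert_self x B)
  have hcount : ∀ m, DependsOn (fun σ => m ≤ (B.filter (A · σ)).card) (↑(S x))ᶜ :=
    fun m σ τ h => by simp only [dependsOn_compl_of_pairwiseDisjoint hx hA hS h]
  have hsplit : ∀ σ, j + 1 ≤ ((insert x B).filter (A · σ)).card ↔
      (A x σ ∧ j ≤ (B.filter (A · σ)).card) ∨
        (¬ A x σ ∧ j + 1 ≤ (B.filter (A · σ)).card) := by
    intro σ
    by_cases h : A x σ
    · rw [Finset.filter_insert, if_pos h,
        Finset.card_insert_of_notMem fun hm => hx (Finset.mem_filter.mp hm).1]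
      simp [h]
    · simp [Finset.filter_insert, h]
  rw [prB_congr p hsplit, prB_or_of_disjoint p fun σ h h' => h'.1 h.1,
    prB_and_of_dependsOn p _ hAx (hcount j),
    prB_and_of_dependsOn p _ (fun σ τ h => congrArg Not (hAx h)) (hcount (j + 1)),
    ← prB_add_prB_not p (A x), add_sub_cancel_left]

theorem binomialTail_le_prB_le_card_filter {p q : ℝ} (hp0 : 0 ≤ p) (hp1 : p ≤ 1)
    (hq0 : 0 ≤ q) (A : ι → (V → Bool) → Prop) (S : ι → Finset V) (B : Finset ι)
    (hA : ∀ x ∈ B, DependsOn (A x) (S x)) (hS : (B : Set ι).PairwiseDisjoint S)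
    (hq : ∀ x ∈ B, q ≤ prB p (A x)) (j : ℕ) :
    binomialTail B.card q j ≤ prB p fun σ => j ≤ (B.filter (A · σ)).card := by
  induction B using Finset.induction_on generalizing j with
  | empty =>
    cases j with
    | zero => simp [binomialTail_zero_right, prB_of_forall]
    | succ j => simpa [binomialTail_zero_succ] using prB_nonneg hp0 hp1 _
  | insert x B hx ih =>
    have ih' := ih (fun y hy => hA y (Finset.mem_insert_of_mem hy)) (hS.subset (by simp))
      fun y hy => hq y (Finset.mem_insert_of_mem hy)
    have hqa : q ≤ prB p (A x) := hq x (Finset.mem_insert_self x B)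
    have ha1 : prB p (A x) ≤ 1 := prB_le_one hp0 hp1 _
    cases j with
    | zero => simp [binomialTail_zero_right, prB_of_forall]
    | succ j =>
      rw [Finset.card_insert_of_notMem hx, binomialTail_succ_succ,
        prB_succ_le_card_filter_insert p hx hA hS]
      have hmono : prB p (fun σ => j + 1 ≤ (B.filter (A · σ)).card) ≤
          prB p (fun σ => j ≤ (B.filter (A · σ)).card) := prB_mono hp0 hp1 fun σ h => by omega
      nlinarith [mul_le_mul_of_nonneg_left (ih' j) hq0,
        mul_le_mul_of_nonneg_left (ih' (j + 1)) (by linarith : 0 ≤ 1 - q)]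

end Domination

section Pooling

variable {V F : Type}

lemma poolGraph_adj {tests : F → Finset V} {x : V} {a : F} (h : x ∈ tests a) :
    (poolGraph tests).Adj (Sum.inl x) (Sum.inr a) := by
  rw [poolGraph, SimpleGraph.fromRel_adj]
  exact ⟨Sum.inl_ne_inr, Or.inl ⟨x, a, rfl, rfl, h⟩⟩

variable [Fintype V]

noncomputable def secondNbhd (tests : F → Finset V) (x : V) : Finset V :=
  Finset.univ.filter fun y => y = x ∨ ∃ a, x ∈ tests a ∧ y ∈ tests a

lemma exists_walk_of_mem_secondNbhd {tests : F → Finset V} {x y : V}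
    (hy : y ∈ secondNbhd tests x) :
    ∃ w : (poolGraph tests).Walk (Sum.inl x) (Sum.inl y), w.length ≤ 2 := by
  rcases (Finset.mem_filter.mp hy).2 with rfl | ⟨a, hxa, hya⟩
  · exact ⟨.nil, by simp⟩
  · exact ⟨.cons (poolGraph_adj hxa) (.cons (poolGraph_adj hya).symm .nil), by simp⟩

lemma disjoint_secondNbhd {tests : F → Finset V} {x y : V}
    (h : 4 < (poolGraph tests).dist (Sum.inl x) (Sum.inl y)) :
    Disjoint (secondNbhd tests x) (secondNbhd tests y) := by
  refine Finset.disjoint_left.mpr fun z hzx hzy => ?_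
  obtain ⟨w₁, hw₁⟩ := exists_walk_of_mem_secondNbhd hzx
  obtain ⟨w₂, hw₂⟩ := exists_walk_of_mem_secondNbhd hzy
  have := SimpleGraph.dist_le (w₁.append w₂.reverse)
  simp only [SimpleGraph.Walk.length_append, SimpleGraph.Walk.length_reverse] at this
  omega

lemma dependsOn_disguisedInf (tests : F → Finset V) (x : V) :
    DependsOn (disguisedInf tests x) (secondNbhd tests x) := by
  intro σ τ h
  have hmem : ∀ a, x ∈ tests a → ∀ y ∈ tests a, y ∈ (secondNbhd tests x : Set V) :=
    fun a hxa y hya => by simpa [secondNbhd] using Or.inr ⟨a, hxa, hya⟩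
  simp only [disguisedInf, h x (by simp [secondNbhd])]
  exact propext <| and_congr_right fun _ => forall₂_congr fun a hxa =>
    exists_congr fun y => and_congr_right fun hya => by rw [h y (hmem a hxa y hya)]

end Pooling

section Disguise

variable {V F : Type} [Fintype V] [DecidableEq V] [Fintype F]

lemma mul_prod_le_prB_disguisedInf {p : ℝ} (hp0 : 0 ≤ p) (hp1 : p ≤ 1)
    (tests : F → Finset V) (x : V) :
    p * ∏ a ∈ Finset.univ.filter (fun a => x ∈ tests a), (1 - (1 - p) ^ ((tests a).card - 1))
      ≤ prB p (disguisedInf tests x) := by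
  set s := Finset.univ.filter fun a => x ∈ tests a
  have hcover : ∀ a ∈ s, prB p (fun σ => ∃ y ∈ (tests a).erase x, σ y = true) =
      1 - (1 - p) ^ ((tests a).card - 1) := fun a ha => by
    rw [prB_exists_mem_eq_true, Finset.card_erase_of_mem (Finset.mem_filter.mp ha).2]
  have hiff : ∀ σ, disguisedInf tests x σ ↔
      σ x = true ∧ ∀ a ∈ s, ∃ y ∈ (tests a).erase x, σ y = true := fun σ => by
    simp only [disguisedInf, s, Finset.mem_filter, Finset.mem_univ, true_and, Finset.mem_erase]
    exact and_congr_right fun _ => forall₂_congr fun a _ => exists_congr fun y => by tauto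
  have hmono : ∀ t : Finset V, Monotone fun σ : V → Bool => ∃ y ∈ t, σ y = true :=
    fun t σ τ h ⟨y, hy, hσy⟩ => ⟨y, hy, Bool.le_iff_imp.mp (h y) hσy⟩
  have hcovered : ∏ a ∈ s, (1 - (1 - p) ^ ((tests a).card - 1)) ≤
      prB p (fun σ => ∀ a ∈ s, ∃ y ∈ (tests a).erase x, σ y = true) := by
    rw [← Finset.prod_congr rfl hcover]
    exact prod_prB_le_prB_forall hp0 hp1 s fun a _ => hmono _
  have hharris := prB_mul_prB_le_prB_and hp0 hp1 (E := fun σ => σ x = true)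
    (G := fun σ => ∀ a ∈ s, ∃ y ∈ (tests a).erase x, σ y = true)
    (fun σ τ h => Bool.le_iff_imp.mp (h x)) fun σ τ h hσ a ha => hmono _ h (hσ a ha)
  rw [prB_coord_eq_true] at hharris
  rw [prB_congr p hiff]
  exact (mul_le_mul_of_nonneg_left hcovered hp0).trans hharris

end Disguise

lemma pow_le_prod_one_sub_pow {ι : Type*} {p : ℝ} (hp0 : 0 ≤ p) (hp1 : p ≤ 1) {d : ℕ}
    {s : Finset ι} (hs : s.card ≤ d) {k : ι → ℕ} (hk : ∀ a ∈ s, 1 ≤ k a) :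
    p ^ d ≤ ∏ a ∈ s, (1 - (1 - p) ^ k a) :=
  calc p ^ d ≤ p ^ s.card := pow_le_pow_of_le_one hp0 hp1 hs
    _ = ∏ _a ∈ s, p := (Finset.prod_const p).symm
    _ ≤ ∏ a ∈ s, (1 - (1 - p) ^ k a) := Finset.prod_le_prod (fun _ _ => hp0) fun a ha => by
        have := pow_le_of_le_one (sub_nonneg.mpr hp1) (sub_le_self 1 hp0)
          (Nat.one_le_iff_ne_zero.mp (hk a ha))
        linarith

theorem stmt_11_general (Γ d : ℕ) :
    ∃ C : ℝ, 0 < C ∧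
      ∀ (V F : Type) (_ : Fintype V) (_ : DecidableEq V) (_ : Fintype F)
        (tests : F → Finset V),
        (∀ a, 2 ≤ (tests a).card ∧ (tests a).card ≤ Γ) →
        ∀ B : Finset V,
          (∀ x ∈ B, (Finset.univ.filter fun a => x ∈ tests a).card ≤ d) →
          (∀ x ∈ B, ∀ y ∈ B, x ≠ y →
            6 ≤ (poolGraph tests).dist (Sum.inl x) (Sum.inl y)) →
          ∀ p : ℝ, 0 < p → p < 1 / 2 →
            -- mutual independence of the events over `B`
            (∀ S ⊆ B, prB p (fun σ => ∀ x ∈ S, disguisedInf tests x σ)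
                = ∏ x ∈ S, prB p (fun σ => disguisedInf tests x σ)) ∧
            -- FKG lower bound for each individual
            (∀ x ∈ B,
              p * ∏ a ∈ Finset.univ.filter (fun a => x ∈ tests a),
                  (1 - (1 - p) ^ ((tests a).card - 1))
                ≤ prB p (fun σ => disguisedInf tests x σ)) ∧
            (∀ x ∈ B, p * (C * p ^ d) ≤ prB p (fun σ => disguisedInf tests x σ)) ∧
            -- stochastic domination of a binomial tail
            (∀ j : ℕ,
              ∑ i ∈ Finset.Icc j B.card, (B.card.choose i : ℝ) *
                  (p * (C * p ^ d)) ^ i * (1 - p * (C * p ^ d)) ^ (B.card - i)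
                ≤ prB p (fun σ => j ≤ (B.filter fun x => disguisedInf tests x σ).card)) := by
  refine ⟨1, one_pos, fun V F _ _ _ tests htests B hdeg hdist p hp0 hp2 => ?_⟩
  have hp1 : p ≤ 1 := by linarith
  have hdep : ∀ x ∈ B, DependsOn (disguisedInf tests x) (secondNbhd tests x) :=
    fun x _ => dependsOn_disguisedInf tests x
  have hdisj : (B : Set V).PairwiseDisjoint (secondNbhd tests) := fun x hx y hy hxy =>
    disjoint_secondNbhd (by have := hdist x hx y hy hxy; omega)
  have hfkg : ∀ x ∈ B, p * ∏ a ∈ Finset.univ.filter (fun a => x ∈ tests a),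
      (1 - (1 - p) ^ ((tests a).card - 1)) ≤ prB p (disguisedInf tests x) :=
    fun x _ => mul_prod_le_prB_disguisedInf hp0.le hp1 tests x
  have hlower : ∀ x ∈ B, p * (1 * p ^ d) ≤ prB p (disguisedInf tests x) := fun x hx => by
    refine le_trans ?_ (hfkg x hx)
    rw [one_mul]
    exact mul_le_mul_of_nonneg_left (pow_le_prod_one_sub_pow hp0.le hp1 (hdeg x hx)
      fun a _ => Nat.le_sub_of_add_le (htests a).1) hp0.le
  exact ⟨fun S hS => prB_forall_eq_prod p _ _ S (fun x hx => hdep x (hS hx)) (hdisj.subset hS),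
    hfkg, hlower, binomialTail_le_prB_le_card_filter hp0.le hp1 (by positivity) _ _ B hdep hdisj
      hlower⟩

/-- For a set `B` of individuals of degree at most `d`, pairwise at graph distance at
least 6, under independent Bernoulli(p) infections: the events of being totally disguised
and infected are mutually independent, each has probability at least
`p·∏_{a∋x}(1-(1-p)^{|a|-1}) ≥ p·C·p^d`, and the number of disguised infected individuals
in `B` stochastically dominates `Bin(|B|, p·C·p^d)`. -/
theorem stmt_11 (Γ d : ℕ) (hΓ : 2 ≤ Γ) :
    ∃ C : ℝ, 0 < C ∧
      ∀ (V F : Type) (_ : Fintype V) (_ : DecidableEq V) (_ : Fintype F)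
        (tests : F → Finset V),
        (∀ a, 2 ≤ (tests a).card ∧ (tests a).card ≤ Γ) →
        ∀ B : Finset V,
          (∀ x ∈ B, (Finset.univ.filter fun a => x ∈ tests a).card ≤ d) →
          (∀ x ∈ B, ∀ y ∈ B, x ≠ y →
            6 ≤ (poolGraph tests).dist (Sum.inl x) (Sum.inl y)) →
          ∀ p : ℝ, 0 < p → p < 1 / 2 →
            -- mutual independence of the events over `B`
            (∀ S ⊆ B, prB p (fun σ => ∀ x ∈ S, disguisedInf tests x σ)
                = ∏ x ∈ S, prB p (fun σ => disguisedInf tests x σ)) ∧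
            -- FKG lower bound for each individual
            (∀ x ∈ B,
              p * ∏ a ∈ Finset.univ.filter (fun a => x ∈ tests a),
                  (1 - (1 - p) ^ ((tests a).card - 1))
                ≤ prB p (fun σ => disguisedInf tests x σ)) ∧
            (∀ x ∈ B, p * (C * p ^ d) ≤ prB p (fun σ => disguisedInf tests x σ)) ∧
            -- stochastic domination of a binomial tail
            (∀ j : ℕ,
              ∑ i ∈ Finset.Icc j B.card, (B.card.choose i : ℝ) *
                  (p * (C * p ^ d)) ^ i * (1 - p * (C * p ^ d)) ^ (B.card - i)
                ≤ prB p (fun σ => j ≤ (B.filter fun x => disguisedInf tests x σ).card)) :=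
  stmt_11_general Γ d
end
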